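/- Let G be an infinite, locally finite graph with minimal degree at least 2 and bounded degrees containing an infinite non-backtracking ray e_0, e_1, e_2, .... Then -1 lies in the spectrum of B, witnessed by the approximate eigenfunctions f_k = sum_{i=1}^{k} (-1)^i delta_{e_i} + sum_{i=0}^{k-1} (-1)^i delta_{e_i^{-1}}. -/

import Mathlib

/-!
If `head e = tail e'`, then `B (δ_{e⁻¹} - δ_{e'}) = δ_{e'⁻¹} - δ_e`, since `B δ_{e⁻¹}` and
`B δ_{e'}` are the indicators of the edges into `head e` other than `e`, resp. other than `e'⁻¹`.
Writing `f_k` as the sum over `j < k` of `(-1)^j (δ_{e_j⁻¹} - δ_{e_{j+1}})`, the vector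
`(B + 1) f_k` telescopes to `d_0 - (-1)^k d_k` with `d_j = δ_{e_j⁻¹} - δ_{e_j}`, so it has norm at
most `4`. Along a simple non-backtracking ray no edge `e_i` equals another `e_j` or a reversal
`e_j⁻¹`, so `f_k` takes the values `±1` at `e_1, …, e_k` and `‖f_k‖² ≥ k`. Thus `f_k / ‖f_k‖` are
approximate eigenvectors for `-1`, which therefore cannot lie in the resolvent set, where `B + 1`
would be bounded below.
-/

theorem mem_spectrum_of_forall_approx_eigenvector {𝕜 X : Type*} [NontriviallyNormedField 𝕜]
    [NormedAddCommGroup X] [NormedSpace 𝕜 X] (T : X →L[𝕜] X) (c : 𝕜)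
    (h : ∀ ε : ℝ, 0 < ε → ∃ f : X, f ≠ 0 ∧ ‖(T - c • 1) f‖ ≤ ε * ‖f‖) :
    c ∈ spectrum 𝕜 T := by
  rintro ⟨u, hu⟩
  set C := ‖(↑u⁻¹ : X →L[𝕜] X)‖
  have hbound : ∀ f, ‖f‖ ≤ C * ‖(T - c • 1) f‖ := fun f => by
    have : (T - c • 1) f = -(u : X →L[𝕜] X) f := by
      rw [hu, Algebra.algebraMap_eq_smul_one]; simp
    calc ‖f‖ = ‖(↑u⁻¹ : X →L[𝕜] X) ((u : X →L[𝕜] X) f)‖ :=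
          congrArg norm (DFunLike.congr_fun u.inv_mul f).symm
      _ ≤ C * ‖(T - c • 1) f‖ := by
          rw [this, norm_neg]; exact ContinuousLinearMap.le_opNorm _ _
  obtain ⟨f, hf, hTf⟩ := h (1 / (C + 1)) (by positivity)
  have hf' : 0 < ‖f‖ := norm_pos_iff.mpr hf
  have : ‖f‖ < ‖f‖ := calc
    ‖f‖ ≤ C * (1 / (C + 1) * ‖f‖) := (hbound f).trans (by gcongr)
    _ = C / (C + 1) * ‖f‖ := by ring
    _ < 1 * ‖f‖ := by gcongr; rw [div_lt_one (by positivity)]; linarith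
    _ = ‖f‖ := one_mul _
  exact this.false

theorem tsum_subtype_pi_single {α M : Type*} [AddCommMonoid M] [TopologicalSpace M]
    [DecidableEq α] (P : α → Prop) [DecidablePred P] (a : α) (c : M) :
    ∑' x : {x // P x}, (Pi.single a c : α → M) x = if P a then c else 0 := by
  split_ifs with h
  · rw [tsum_eq_single ⟨a, h⟩ fun x hx => by simp [Subtype.ext_iff.not.mp hx]]
    simp
  · convert tsum_zero with x
    have hxa : (x : α) ≠ a := fun hxa => h (hxa ▸ x.2)
    simp [hxa]

theorem lp.sum_norm_sq_le_norm_sq {α : Type*} {E : α → Type*} [∀ i, NormedAddCommGroup (E i)]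
    (f : lp E 2) (s : Finset α) : ∑ i ∈ s, ‖f i‖ ^ 2 ≤ ‖f‖ ^ 2 := by
  simpa using lp.sum_rpow_le_norm_rpow (p := 2) (by norm_num) f s

local notation "δ" e:max => lp.single (E := fun _ => ℂ) 2 e 1

section NonBacktracking

variable {V E : Type} {tail head : E → V} {inv : E → E}

theorem ray_ne_inv_ray (htail_inv : ∀ e, tail (inv e) = head e) {ray : ℕ → E}
    (hhead : ∀ j, head (ray j) = tail (ray (j + 1))) (hnb : ∀ j, ray (j + 1) ≠ inv (ray j))
    (htail_inj : Function.Injective fun i => tail (ray i)) (i j : ℕ) :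
    ray i ≠ inv (ray j) := by
  intro h
  obtain rfl : i = j + 1 := htail_inj (by simp only [h, htail_inv, hhead])
  exact hnb j h

variable [DecidableEq E] {follows : E → E → Prop}
  {B : lp (fun _ : E => ℂ) 2 →L[ℂ] lp (fun _ : E => ℂ) 2}

open Classical in
theorem apply_single_apply (hB : ∀ f e, B f e = ∑' e' : {e' : E // follows e e'}, f e')
    (e x : E) : B (δ e) x = if follows x e then 1 else 0 := by
  rw [hB]
  exact tsum_subtype_pi_single (follows x) e 1

theorem apply_single_inv_sub_single (hinv_inv : ∀ e, inv (inv e) = e)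
    (htail_inv : ∀ e, tail (inv e) = head e)
    (hfollows : ∀ e e', follows e e' ↔ head e = tail e' ∧ e' ≠ inv e)
    (hB : ∀ f e, B f e = ∑' e' : {e' : E // follows e e'}, f e')
    {e e' : E} (h : head e = tail e') :
    B (δ (inv e) - δ e') = δ (inv e') - δ e := by
  have hinv : Function.Involutive inv := hinv_inv
  have hhead_inv : head (inv e') = tail e' := by rw [← htail_inv, hinv_inv]
  ext x
  classical
  simp only [map_sub, lp.coeFn_sub, Pi.sub_apply, apply_single_apply hB, hfollows, htail_inv,
    lp.single_apply, Pi.single_apply, h, hinv.injective.ne_iff]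
  by_cases hx : head x = tail e'
  · have : e' ≠ inv x ↔ x ≠ inv e' := by rw [ne_comm, Ne, hinv.eq_iff]
    simp only [hx, this, true_and]
    split_ifs <;> simp_all
  · have hxe : x ≠ e := by rintro rfl; exact hx h
    have hxe' : x ≠ inv e' := by rintro rfl; exact hx hhead_inv
    simp [hx, hxe, hxe']

variable (inv) in
noncomputable def rayEigenvector (ray : ℕ → E) (k : ℕ) : lp (fun _ : E => ℂ) 2 :=
  (∑ i ∈ Finset.Icc 1 k, ((-1 : ℂ) ^ i) • δ (ray i)) +
    ∑ i ∈ Finset.range k, ((-1 : ℂ) ^ i) • δ (inv (ray i))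

theorem rayEigenvector_eq_sum (ray : ℕ → E) (k : ℕ) :
    rayEigenvector inv ray k =
      ∑ j ∈ Finset.range k, (-1 : ℂ) ^ j • (δ (inv (ray j)) - δ (ray (j + 1))) := by
  rw [rayEigenvector, ← Finset.Ico_add_one_right_eq_Icc, Finset.sum_Ico_eq_sum_range,
    Nat.add_sub_cancel, ← Finset.sum_add_distrib]
  refine Finset.sum_congr rfl fun j _ => ?_
  rw [add_comm 1 j, pow_succ]
  module

theorem rayEigenvector_apply_ray {ray : ℕ → E} (hinj : Function.Injective ray)
    (hne : ∀ i j, ray i ≠ inv (ray j)) {i k : ℕ} (hi : i ∈ Finset.Icc 1 k) :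
    rayEigenvector inv ray k (ray i) = (-1) ^ i := by
  simp only [rayEigenvector, lp.coeFn_add, lp.coeFn_sum, Pi.add_apply, Finset.sum_apply,
    lp.coeFn_smul, Pi.smul_apply, lp.single_apply, Pi.single_apply, hinj.eq_iff, hne]
  simp [hi]

theorem le_norm_sq_rayEigenvector {ray : ℕ → E} (hinj : Function.Injective ray)
    (hne : ∀ i j, ray i ≠ inv (ray j)) (k : ℕ) :
    (k : ℝ) ≤ ‖rayEigenvector inv ray k‖ ^ 2 := calc
  (k : ℝ) = ∑ i ∈ Finset.Icc 1 k, ‖rayEigenvector inv ray k (ray i)‖ ^ 2 := by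
    rw [Finset.sum_congr rfl fun i hi => by rw [rayEigenvector_apply_ray hinj hne hi]]
    simp
  _ = ∑ e ∈ (Finset.Icc 1 k).image ray, ‖rayEigenvector inv ray k e‖ ^ 2 :=
    (Finset.sum_image (f := fun e => ‖rayEigenvector inv ray k e‖ ^ 2)
      fun _ _ _ _ h => hinj h).symm
  _ ≤ ‖rayEigenvector inv ray k‖ ^ 2 := lp.sum_norm_sq_le_norm_sq _ _

theorem sub_neg_one_smul_apply_rayEigenvector
    (hB : ∀ e e', head e = tail e' → B (δ (inv e) - δ e') = δ (inv e') - δ e)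
    {ray : ℕ → E} (hhead : ∀ j, head (ray j) = tail (ray (j + 1))) (k : ℕ) :
    (B - (-1 : ℂ) • 1) (rayEigenvector inv ray k) =
      (δ (inv (ray 0)) - δ (ray 0)) - (-1 : ℂ) ^ k • (δ (inv (ray k)) - δ (ray k)) := by
  have htelescope := Finset.sum_range_sub' (fun j => (-1 : ℂ) ^ j • (δ (inv (ray j)) - δ (ray j))) k
  rw [pow_zero, one_smul] at htelescope
  have happly (f : lp (fun _ : E => ℂ) 2) : (B - (-1 : ℂ) • 1) f = B f + f := by simp
  rw [← htelescope, rayEigenvector_eq_sum, map_sum]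
  refine Finset.sum_congr rfl fun j _ => ?_
  rw [map_smul, happly, hB _ _ (hhead j), pow_succ]
  module

theorem exists_rayEigenvector_approx
    (hB : ∀ e e', head e = tail e' → B (δ (inv e) - δ e') = δ (inv e') - δ e)
    {ray : ℕ → E} (hhead : ∀ j, head (ray j) = tail (ray (j + 1)))
    (hinj : Function.Injective ray) (hne : ∀ i j, ray i ≠ inv (ray j)) {ε : ℝ} (hε : 0 < ε) :
    ∃ k : ℕ, 1 ≤ k ∧ rayEigenvector inv ray k ≠ 0 ∧
      ‖(B - (-1 : ℂ) • 1) (rayEigenvector inv ray k)‖ ≤ ε * ‖rayEigenvector inv ray k‖ := by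
  obtain ⟨k, hk⟩ := exists_nat_ge (16 / ε ^ 2 + 1)
  have hk16 : 16 ≤ ε ^ 2 * k := by
    have : 16 / ε ^ 2 ≤ k := by linarith
    rwa [div_le_iff₀ (by positivity), mul_comm] at this
  have hk1 : (1 : ℝ) ≤ k := by linarith [show 0 ≤ 16 / ε ^ 2 by positivity]
  have hnorm := le_norm_sq_rayEigenvector hinj hne k
  have hδ (e : E) : ‖δ (inv e) - δ e‖ ≤ 2 := calc
    _ ≤ ‖δ (inv e)‖ + ‖δ e‖ := norm_sub_le _ _
    _ = 2 := by simp [lp.norm_single]; norm_num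
  refine ⟨k, by exact_mod_cast hk1, fun h0 => ?_, ?_⟩
  · rw [h0, norm_zero] at hnorm
    linarith
  calc _ ≤ ‖δ (inv (ray 0)) - δ (ray 0)‖ + ‖(-1 : ℂ) ^ k • (δ (inv (ray k)) - δ (ray k))‖ := by
        rw [sub_neg_one_smul_apply_rayEigenvector hB hhead]
        exact norm_sub_le _ _
    _ ≤ 4 := by
        rw [norm_smul, norm_pow, norm_neg, norm_one, one_pow, one_mul]
        linarith [hδ (ray 0), hδ (ray k)]
    _ ≤ ε * ‖rayEigenvector inv ray k‖ := by
        refine le_of_sq_le_sq ?_ (by positivity)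
        rw [mul_pow]
        nlinarith [mul_le_mul_of_nonneg_left hnorm (sq_nonneg ε)]

end NonBacktracking

theorem neg_one_mem_spectrum_nonbacktracking_general
    {V E : Type} [DecidableEq E] (tail head : E → V) (inv : E → E)
    (hinv_inv : ∀ e, inv (inv e) = e)
    (htail_inv : ∀ e, tail (inv e) = head e)
    (follows : E → E → Prop)
    (hfollows : ∀ e e', follows e e' ↔ head e = tail e' ∧ e' ≠ inv e)
    (B : lp (fun _ : E => ℂ) 2 →L[ℂ] lp (fun _ : E => ℂ) 2)
    (hB : ∀ f e, B f e = ∑' e' : {e' : E // follows e e'}, f e')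
    -- an infinite non-backtracking ray (a simple ray: the tails are pairwise distinct)
    (ray : ℕ → E)
    (hray : ∀ i, follows (ray i) (ray (i + 1)))
    (hray_inj : Function.Injective fun i => tail (ray i)) :
    (∀ ε : ℝ, 0 < ε → ∃ k : ℕ, 1 ≤ k ∧
      ((∑ i ∈ Finset.Icc 1 k, ((-1 : ℂ) ^ i) • lp.single 2 (ray i) (1 : ℂ)) +
          ∑ i ∈ Finset.range k, ((-1 : ℂ) ^ i) • lp.single 2 (inv (ray i)) (1 : ℂ) :
          lp (fun _ : E => ℂ) 2) ≠ 0 ∧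
      ‖(B - (-1 : ℂ) • 1)
          ((∑ i ∈ Finset.Icc 1 k, ((-1 : ℂ) ^ i) • lp.single 2 (ray i) (1 : ℂ)) +
            ∑ i ∈ Finset.range k, ((-1 : ℂ) ^ i) • lp.single 2 (inv (ray i)) (1 : ℂ))‖ ≤
        ε * ‖((∑ i ∈ Finset.Icc 1 k, ((-1 : ℂ) ^ i) • lp.single 2 (ray i) (1 : ℂ)) +
            ∑ i ∈ Finset.range k, ((-1 : ℂ) ^ i) • lp.single 2 (inv (ray i)) (1 : ℂ) :
            lp (fun _ : E => ℂ) 2)‖) ∧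
    (-1 : ℂ) ∈ spectrum ℂ B := by
  have hhead (j : ℕ) : head (ray j) = tail (ray (j + 1)) := ((hfollows _ _).1 (hray j)).1
  have hnb (j : ℕ) : ray (j + 1) ≠ inv (ray j) := ((hfollows _ _).1 (hray j)).2
  have hinj : Function.Injective ray := fun i j h => hray_inj (congrArg tail h)
  have happrox (ε : ℝ) (hε : 0 < ε) :=
    exists_rayEigenvector_approx (B := B)
      (fun _ _ => apply_single_inv_sub_single hinv_inv htail_inv hfollows hB) hhead hinj
      (ray_ne_inv_ray htail_inv hhead hnb hray_inj) hε
  refine ⟨happrox, mem_spectrum_of_forall_approx_eigenvector B (-1) fun ε hε => ?_⟩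
  obtain ⟨k, -, hne, hle⟩ := happrox ε hε
  exact ⟨_, hne, hle⟩

/-- For an infinite, locally finite graph with minimal degree at least 2 and
bounded degrees containing an infinite non-backtracking ray, `-1` lies in the spectrum of
the non-backtracking operator `B`, witnessed by the approximate eigenfunctions
`f k = ∑_{i=1}^{k} (-1)^i δ_{e i} + ∑_{i=0}^{k-1} (-1)^i δ_{(e i)⁻¹}`. -/
theorem neg_one_mem_spectrum_nonbacktracking
    {V E : Type} [DecidableEq E] (tail head : E → V) (inv : E → E)
    (hinv_inv : ∀ e, inv (inv e) = e)
    (hinv_ne : ∀ e, inv e ≠ e)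
    (htail_inv : ∀ e, tail (inv e) = head e)
    (follows : E → E → Prop)
    (hfollows : ∀ e e', follows e e' ↔ head e = tail e' ∧ e' ≠ inv e)
    (hinfinite : Infinite V)
    (dmax : ℕ)
    (hdeg : ∀ v : V, 2 ≤ Nat.card {e : E // tail e = v} ∧
      Nat.card {e : E // tail e = v} ≤ dmax)
    (B : lp (fun _ : E => ℂ) 2 →L[ℂ] lp (fun _ : E => ℂ) 2)
    (hB : ∀ f e, B f e = ∑' e' : {e' : E // follows e e'}, f e')
    -- an infinite non-backtracking ray (a simple ray: the tails are pairwise distinct)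
    (ray : ℕ → E)
    (hray : ∀ i, follows (ray i) (ray (i + 1)))
    (hray_inj : Function.Injective fun i => tail (ray i)) :
    (∀ ε : ℝ, 0 < ε → ∃ k : ℕ, 1 ≤ k ∧
      ((∑ i ∈ Finset.Icc 1 k, ((-1 : ℂ) ^ i) • lp.single 2 (ray i) (1 : ℂ)) +
          ∑ i ∈ Finset.range k, ((-1 : ℂ) ^ i) • lp.single 2 (inv (ray i)) (1 : ℂ) :
          lp (fun _ : E => ℂ) 2) ≠ 0 ∧
      ‖(B - (-1 : ℂ) • 1)
          ((∑ i ∈ Finset.Icc 1 k, ((-1 : ℂ) ^ i) • lp.single 2 (ray i) (1 : ℂ)) +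
            ∑ i ∈ Finset.range k, ((-1 : ℂ) ^ i) • lp.single 2 (inv (ray i)) (1 : ℂ))‖ ≤
        ε * ‖((∑ i ∈ Finset.Icc 1 k, ((-1 : ℂ) ^ i) • lp.single 2 (ray i) (1 : ℂ)) +
            ∑ i ∈ Finset.range k, ((-1 : ℂ) ^ i) • lp.single 2 (inv (ray i)) (1 : ℂ) :
            lp (fun _ : E => ℂ) 2)‖) ∧
    (-1 : ℂ) ∈ spectrum ℂ B :=
  neg_one_mem_spectrum_nonbacktracking_general tail head inv hinv_inv htail_inv follows hfollows B
    hB ray hray hray_inj
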